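/- arXiv:2110.10449 — 3 statements merged into one kernel-verified Lean document; each statement's English description precedes it below -/
import Mathlib

section
/- Let Q₁,...,Qₘ be symmetric positive semidefinite n×n real matrices, c₁,...,cₘ ∈ ℝⁿ, d₁,...,dₘ ∈ ℝ, and gᵢ(x) = dᵢ - cᵢᵀx - ½xᵀQᵢx. Suppose x̄ satisfies gᵢ(x̄) > 0 for all i and Σᵢ (cᵢ + Qᵢx̄)/gᵢ(x̄) = 0 (i.e., x̄ is a critical point of the barrier L(x) = -Σᵢ log gᵢ(x)). Then for every x with gᵢ(x) ≥ 0 for all i, it holds that Σᵢ [((cᵢ + Qᵢx̄)ᵀ(x - x̄))²/gᵢ(x̄)² + (x - x̄)ᵀQᵢ(x - x̄)/gᵢ(x̄)] ≤ m² + m. -/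
/-!
Put `y = x - x̄`, `sᵢ = gᵢ(x̄)`, `tᵢ = (cᵢ + Qᵢx̄)ᵀy / sᵢ` and `δᵢ = ½ yᵀQᵢy / sᵢ ≥ 0`, so that
the claim reads `Σ (tᵢ² + 2δᵢ) ≤ m² + m`. The exact second-order Taylor expansion of `gᵢ` at `x̄`
gives `tᵢ + δᵢ = 1 - gᵢ(x)/sᵢ ≤ 1`, and criticality of `x̄` gives `Σ tᵢ = 0`. These two facts
force `1 - m ≤ tᵢ ≤ 1`, hence `(1 - tᵢ)(tᵢ + m - 1) ≥ 0`, i.e. `tᵢ² + 2δᵢ ≤ m + 1 - m tᵢ`;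
summing over `i` yields the bound.
-/

open Matrix

lemma one_sub_card_le_of_sum_eq_zero {ι : Type*} [Fintype ι] {t : ι → ℝ}
    (ht : ∀ i, t i ≤ 1) (hsum : ∑ i, t i = 0) (i : ι) :
    1 - Fintype.card ι ≤ t i := by
  have hle : 1 - t i ≤ ∑ j, (1 - t j) :=
    Finset.single_le_sum (fun j _ => sub_nonneg.mpr (ht j)) (Finset.mem_univ i)
  simp only [Finset.sum_sub_distrib, hsum, Finset.sum_const, Finset.card_univ, nsmul_eq_mul,
    mul_one, sub_zero] at hle
  linarith

lemma sum_sq_add_two_mul_le_card_sq_add_card {ι : Type*} [Fintype ι] {t δ : ι → ℝ}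
    (hδ : ∀ i, 0 ≤ δ i) (htδ : ∀ i, t i + δ i ≤ 1) (hsum : ∑ i, t i = 0) :
    ∑ i, (t i ^ 2 + 2 * δ i) ≤ (Fintype.card ι : ℝ) ^ 2 + Fintype.card ι := by
  set k : ℝ := (Fintype.card ι : ℝ)
  have ht : ∀ i, t i ≤ 1 := fun i => by linarith [hδ i, htδ i]
  have hterm : ∀ i, t i ^ 2 + 2 * δ i ≤ k + 1 - k * t i := fun i => by
    nlinarith [mul_nonneg (sub_nonneg.mpr (ht i))
      (sub_nonneg.mpr (one_sub_card_le_of_sum_eq_zero ht hsum i)), htδ i]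
  calc ∑ i, (t i ^ 2 + 2 * δ i) ≤ ∑ i, (k + 1 - k * t i) :=
        Finset.sum_le_sum fun i _ => hterm i
    _ = k ^ 2 + k := by
      rw [Finset.sum_sub_distrib, ← Finset.mul_sum, hsum, Finset.sum_const, Finset.card_univ,
        nsmul_eq_mul]
      ring

lemma Matrix.IsSymm.dotProduct_mulVec_comm {n R : Type*} [Fintype n] [CommSemiring R]
    {A : Matrix n n R} (hA : A.IsSymm) (v w : n → R) : v ⬝ᵥ A *ᵥ w = w ⬝ᵥ A *ᵥ v := by
  rw [dotProduct_mulVec, ← mulVec_transpose, hA.eq, dotProduct_comm]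

lemma quadratic_eq_taylor_expansion {n : Type*} [Fintype n] {Q : Matrix n n ℝ} (hQ : Q.IsSymm)
    (c : n → ℝ) (d : ℝ) (x xbar : n → ℝ) :
    d - c ⬝ᵥ x - (1/2) * x ⬝ᵥ Q *ᵥ x =
      (d - c ⬝ᵥ xbar - (1/2) * xbar ⬝ᵥ Q *ᵥ xbar) - (c + Q *ᵥ xbar) ⬝ᵥ (x - xbar)
        - (1/2) * (x - xbar) ⬝ᵥ Q *ᵥ (x - xbar) := by
  have hswap := hQ.dotProduct_mulVec_comm xbar x
  simp only [mulVec_sub, dotProduct_sub, sub_dotProduct, add_dotProduct,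
    dotProduct_comm (Q *ᵥ xbar)] at hswap ⊢
  linear_combination (-1/2 : ℝ) * hswap

theorem outer_dikin_ellipsoid (n m : ℕ)
    (Q : Fin m → Matrix (Fin n) (Fin n) ℝ) (hQ : ∀ i, (Q i).PosSemidef)
    (c : Fin m → Fin n → ℝ) (d : Fin m → ℝ)
    (g : Fin m → (Fin n → ℝ) → ℝ)
    (hg : ∀ i x, g i x = d i - c i ⬝ᵥ x - (1/2) * x ⬝ᵥ (Q i).mulVec x)
    (xbar : Fin n → ℝ) (hpos : ∀ i, 0 < g i xbar)
    (hcrit : ∑ i, (g i xbar)⁻¹ • (c i + (Q i).mulVec xbar) = 0)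
    (x : Fin n → ℝ) (hx : ∀ i, 0 ≤ g i x) :
    ∑ i, (((c i + (Q i).mulVec xbar) ⬝ᵥ (x - xbar)) ^ 2 / (g i xbar) ^ 2
        + (x - xbar) ⬝ᵥ (Q i).mulVec (x - xbar) / g i xbar)
      ≤ (m : ℝ) ^ 2 + m := by
  set y := x - xbar
  set t : Fin m → ℝ := fun i => (c i + Q i *ᵥ xbar) ⬝ᵥ y / g i xbar
  set δ : Fin m → ℝ := fun i => (1/2) * y ⬝ᵥ Q i *ᵥ y / g i xbar
  have hδ : ∀ i, 0 ≤ δ i := fun i =>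
    div_nonneg (mul_nonneg (by norm_num) (by simpa using (hQ i).dotProduct_mulVec_nonneg y))
      (hpos i).le
  have htδ : ∀ i, t i + δ i ≤ 1 := fun i => by
    have htaylor := quadratic_eq_taylor_expansion
      (isHermitian_iff_isSymm.mp (hQ i).isHermitian) (c i) (d i) x xbar
    rw [← hg, ← hg] at htaylor
    rw [← add_div, div_le_one (hpos i)]
    linarith [hx i]
  have hsum : ∑ i, t i = 0 := by
    have h := congrArg (· ⬝ᵥ y) hcrit
    simp only [sum_dotProduct, smul_dotProduct, smul_eq_mul, zero_dotProduct] at h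
    simpa only [t, div_eq_inv_mul] using h
  have hbound := sum_sq_add_two_mul_le_card_sq_add_card hδ htδ hsum
  rw [Fintype.card_fin] at hbound
  refine le_of_eq_of_le (Finset.sum_congr rfl fun i _ => ?_) hbound
  have := (hpos i).ne'
  simp only [t, δ]
  field_simp
end

section
/- Under the hypotheses of the outer Dikin ellipsoid theorem (x̄ a critical point of the barrier with gᵢ(x̄) > 0, and x feasible with gᵢ(x) ≥ 0), it holds that Σᵢ Δᵢ/gᵢ(x̄) ≤ m, where Δᵢ = ½(x - x̄)ᵀQᵢ(x - x̄). -/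
open Matrix

theorem sum_delta_le (n m : ℕ)
    (Q : Fin m → Matrix (Fin n) (Fin n) ℝ) (hQ : ∀ i, (Q i).PosSemidef)
    (c : Fin m → Fin n → ℝ) (d : Fin m → ℝ)
    (g : Fin m → (Fin n → ℝ) → ℝ)
    (hg : ∀ i x, g i x = d i - c i ⬝ᵥ x - (1/2) * x ⬝ᵥ (Q i).mulVec x)
    (xbar : Fin n → ℝ) (hpos : ∀ i, 0 < g i xbar)
    (hcrit : ∑ i, (g i xbar)⁻¹ • (c i + (Q i).mulVec xbar) = 0)
    (x : Fin n → ℝ) (hx : ∀ i, 0 ≤ g i x) :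
    ∑ i, ((1/2) * (x - xbar) ⬝ᵥ (Q i).mulVec (x - xbar)) / g i xbar ≤ (m : ℝ) := by
  set v := x - xbar with hv
  have hsym : ∀ i (a b : Fin n → ℝ), a ⬝ᵥ (Q i).mulVec b = b ⬝ᵥ (Q i).mulVec a := by
    intro i a b
    have ht : (Q i)ᵀ = Q i := (hQ i).isHermitian
    nth_rewrite 1 [← ht]
    rw [dotProduct_mulVec, vecMul_transpose, dotProduct_comm]
  have key : ∀ i, (1/2) * v ⬝ᵥ (Q i).mulVec v
      = g i xbar - g i x - (c i + (Q i).mulVec xbar) ⬝ᵥ v := by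
    intro i
    have hxv : x = xbar + v := by simp [hv]
    rw [hg, hg, hxv]
    simp only [mulVec_add, dotProduct_add, add_dotProduct]
    rw [dotProduct_comm ((Q i).mulVec xbar), hsym i xbar (x - xbar)]
    ring
  have hzero : ∑ i, ((c i + (Q i).mulVec xbar) ⬝ᵥ v) / g i xbar = 0 := by
    have hsplit : ∀ (f : Fin m → Fin n → ℝ), (∑ i, f i) ⬝ᵥ v = ∑ i, f i ⬝ᵥ v := by
      intro f
      simp only [dotProduct, Finset.sum_apply, Finset.sum_mul]
      exact Finset.sum_comm
    have := congrArg (fun w => w ⬝ᵥ v) hcrit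
    simp only [zero_dotProduct, hsplit, smul_dotProduct, smul_eq_mul] at this
    calc ∑ i, ((c i + (Q i).mulVec xbar) ⬝ᵥ v) / g i xbar
        = ∑ i, (g i xbar)⁻¹ * ((c i + (Q i).mulVec xbar) ⬝ᵥ v) := by
          simp [div_eq_inv_mul]
      _ = 0 := this
  calc ∑ i, ((1/2) * v ⬝ᵥ (Q i).mulVec v) / g i xbar
      = ∑ i, ((g i xbar - g i x) / g i xbar - ((c i + (Q i).mulVec xbar) ⬝ᵥ v) / g i xbar) := by
        apply Finset.sum_congr rfl
        intro i _
        rw [key i, sub_div]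
    _ = ∑ i, (g i xbar - g i x) / g i xbar := by
        rw [Finset.sum_sub_distrib, hzero, sub_zero]
    _ ≤ ∑ i : Fin m, (1 : ℝ) := by
        apply Finset.sum_le_sum
        intro i _
        rw [div_le_one (hpos i)]
        linarith [hx i]
    _ = (m : ℝ) := by simp
end

section
/- For m = 2, the corrected radius √(m² + m) equals √6, and consequently any point x in the intersection of two ellipsoids F satisfies (x - x̄)ᵀ∇²L(x̄)(x - x̄) ≤ 6, where x̄ is the analytic center of F. -/
open Matrix Finset

/-!
Put `h = x - x̄`, `sᵢ = gᵢ(x̄)`, `tᵢ = (cᵢ + Qᵢx̄)·h / sᵢ` and `uᵢ = hᵀQᵢh / sᵢ ≥ 0`. Expanding the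
quadratic `gᵢ` around `x̄`, feasibility of `x` reads `tᵢ + uᵢ/2 ≤ 1`, and criticality of `x̄`
reads `∑ tᵢ = 0`. These scalar constraints alone force `∑ (tᵢ² + uᵢ) ≤ m² + m`: the `uᵢ` sum to at
most `2m`, and since `0 ≤ 1 - tᵢ ≤ ∑ⱼ (1 - tⱼ) = m`, we get `m + ∑ tᵢ² = ∑ (1 - tᵢ)² ≤ m²`.
-/

theorem sum_sq_add_le_card_sq_add_card {ι : Type*} [Fintype ι] (t u : ι → ℝ)
    (ht : ∑ i, t i = 0) (hu : ∀ i, 0 ≤ u i) (htu : ∀ i, t i + u i / 2 ≤ 1) :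
    ∑ i, (t i ^ 2 + u i) ≤ (Fintype.card ι : ℝ) ^ 2 + Fintype.card ι := by
  set m : ℝ := ((Fintype.card ι : ℕ) : ℝ)
  have hslack_nonneg : ∀ i, 0 ≤ 1 - t i := fun i => by linarith [hu i, htu i]
  have hslack_sum : ∑ i, (1 - t i) = m := by simp [sum_sub_distrib, ht, m]
  have hslack_le : ∀ i, 1 - t i ≤ m := fun i =>
    hslack_sum ▸ single_le_sum (fun j _ => hslack_nonneg j) (mem_univ i)
  have hsq : ∑ i, (1 - t i) ^ 2 ≤ m ^ 2 :=
    calc ∑ i, (1 - t i) ^ 2 = ∑ i, (1 - t i) * (1 - t i) := by simp only [sq]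
      _ ≤ ∑ i, (1 - t i) * m :=
        sum_le_sum fun i _ => mul_le_mul_of_nonneg_left (hslack_le i) (hslack_nonneg i)
      _ = m ^ 2 := by rw [← sum_mul, hslack_sum, sq]
  have hexpand : ∑ i, (1 - t i) ^ 2 = m + ∑ i, t i ^ 2 := by
    have : ∑ i, (1 - t i) ^ 2 = ∑ i, (1 - t i) - ∑ i, t i + ∑ i, t i ^ 2 := by
      rw [← sum_sub_distrib, ← sum_add_distrib]; exact sum_congr rfl fun i _ => by ring
    rw [this, hslack_sum, ht, sub_zero]
  have hu_sum : ∑ i, u i ≤ 2 * m := by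
    rw [← hslack_sum, mul_sum]
    exact sum_le_sum fun i _ => by linarith [htu i]
  rw [sum_add_distrib]
  linarith

theorem quadratic_eq_taylor {n : Type*} [Fintype n] {Q : Matrix n n ℝ} (hQ : Q.IsSymm)
    (c x y : n → ℝ) :
    c ⬝ᵥ y + 1 / 2 * y ⬝ᵥ Q *ᵥ y = c ⬝ᵥ x + 1 / 2 * x ⬝ᵥ Q *ᵥ x
      + (c + Q *ᵥ x) ⬝ᵥ (y - x) + 1 / 2 * (y - x) ⬝ᵥ Q *ᵥ (y - x) := by
  have hswap : x ⬝ᵥ Q *ᵥ y = y ⬝ᵥ Q *ᵥ x := by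
    rw [dotProduct_mulVec, ← mulVec_transpose, hQ.eq, dotProduct_comm]
  simp only [mulVec_sub, dotProduct_sub, sub_dotProduct, add_dotProduct]
  linarith [dotProduct_comm (Q *ᵥ x) y, dotProduct_comm (Q *ᵥ x) x]

theorem dikin_ellipsoid_bound {ι n : Type*} [Fintype ι] [Fintype n]
    (Q : ι → Matrix n n ℝ) (hQ : ∀ i, (Q i).PosSemidef)
    (c : ι → n → ℝ) (d : ι → ℝ) (g : ι → (n → ℝ) → ℝ)
    (hg : ∀ i x, g i x = d i - c i ⬝ᵥ x - (1/2) * x ⬝ᵥ (Q i).mulVec x)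
    (xbar : n → ℝ) (hpos : ∀ i, 0 < g i xbar)
    (hcrit : ∑ i, (g i xbar)⁻¹ • (c i + (Q i).mulVec xbar) = 0)
    (x : n → ℝ) (hx : ∀ i, 0 ≤ g i x) :
    ∑ i, (((c i + (Q i).mulVec xbar) ⬝ᵥ (x - xbar)) ^ 2 / (g i xbar) ^ 2
        + (x - xbar) ⬝ᵥ (Q i).mulVec (x - xbar) / g i xbar)
      ≤ (Fintype.card ι : ℝ) ^ 2 + Fintype.card ι := by
  set h := x - xbar
  set t : ι → ℝ := fun i => (c i + Q i *ᵥ xbar) ⬝ᵥ h / g i xbar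
  set u : ι → ℝ := fun i => h ⬝ᵥ Q i *ᵥ h / g i xbar
  have ht : ∑ i, t i = 0 := by
    simpa [t, div_eq_inv_mul, sum_dotProduct, mul_add] using congrArg (· ⬝ᵥ h) hcrit
  have hu : ∀ i, 0 ≤ u i := fun i =>
    div_nonneg ((hQ i).dotProduct_mulVec_nonneg h) (hpos i).le
  have htu : ∀ i, t i + u i / 2 ≤ 1 := fun i => by
    have hfeas : (c i + Q i *ᵥ xbar) ⬝ᵥ h + 1 / 2 * h ⬝ᵥ Q i *ᵥ h ≤ g i xbar := by
      have := quadratic_eq_taylor (Q := Q i) (hQ i).isHermitian (c i) xbar x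
      linarith [hx i, hg i x, hg i xbar]
    have : t i + u i / 2 = ((c i + Q i *ᵥ xbar) ⬝ᵥ h + 1 / 2 * h ⬝ᵥ Q i *ᵥ h) / g i xbar := by
      simp only [t, u]; ring
    rwa [this, div_le_one (hpos i)]
  simpa only [t, u, div_pow] using sum_sq_add_le_card_sq_add_card t u ht hu htu

theorem cdt_dikin_bound (n : ℕ)
    (Q : Fin 2 → Matrix (Fin n) (Fin n) ℝ) (hQ : ∀ i, (Q i).PosSemidef)
    (c : Fin 2 → Fin n → ℝ) (d : Fin 2 → ℝ)
    (g : Fin 2 → (Fin n → ℝ) → ℝ)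
    (hg : ∀ i x, g i x = d i - c i ⬝ᵥ x - (1/2) * x ⬝ᵥ (Q i).mulVec x)
    (xbar : Fin n → ℝ) (hpos : ∀ i, 0 < g i xbar)
    (hcrit : ∑ i, (g i xbar)⁻¹ • (c i + (Q i).mulVec xbar) = 0)
    (x : Fin n → ℝ) (hx : ∀ i, 0 ≤ g i x) :
    Real.sqrt ((2 : ℝ) ^ 2 + 2) = Real.sqrt 6 ∧
    ∑ i, (((c i + (Q i).mulVec xbar) ⬝ᵥ (x - xbar)) ^ 2 / (g i xbar) ^ 2
        + (x - xbar) ⬝ᵥ (Q i).mulVec (x - xbar) / g i xbar)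
      ≤ 6 := by
  refine ⟨by norm_num, ?_⟩
  simpa only [Fintype.card_fin, Nat.cast_ofNat, show (2 : ℝ) ^ 2 + 2 = 6 by norm_num]
    using dikin_ellipsoid_bound Q hQ c d g hg xbar hpos hcrit x hx
end
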